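/- For all a, b ∈ V × V, h_J(Q_y a, Q_y b) = −h_J(a, b). Together with Q_y² = id, this says that (T̃M, h_J, Q̃) is an almost para-Hermitian manifold. -/
import Mathlib


open scoped InnerProductSpace

/-- The twin tensor `h_J` of the 0-homogeneous lift `g̃₂` with respect to the natural
almost complex structure `J̃`, represented pointwise on `W = V × V` by
`h_J((u₁,w₁),(u₂,w₂)) = −2⟨u₁,u₂⟩ + (2/‖y‖²)⟨w₁,w₂⟩`. -/
noncomputable def hJ {V : Type*} [NormedAddCommGroup V] [InnerProductSpace ℝ V]
    (y : V) (a b : V × V) : ℝ :=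
  -2 * ⟪a.1, b.1⟫_ℝ + (2 / ‖y‖ ^ 2) * ⟪a.2, b.2⟫_ℝ

/-- The natural almost product structure `Q̃`, represented pointwise on `W = V × V` by
`Q_y(u,w) = ((1/‖y‖)w, ‖y‖u)`. -/
noncomputable def Qnat {V : Type*} [NormedAddCommGroup V] [InnerProductSpace ℝ V]
    (y : V) (a : V × V) : V × V :=
  ((1 / ‖y‖) • a.2, ‖y‖ • a.1)

/-- `h_J(Q_y a, Q_y b) = −h_J(a, b)` and `Q_y² = id`: the triple `(T̃M, h_J, Q̃)` is an
almost para-Hermitian manifold. -/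
theorem almost_para_hermitian_structure
    (V : Type*) [NormedAddCommGroup V] [InnerProductSpace ℝ V] [FiniteDimensional ℝ V]
    (y : V) (hy : y ≠ 0) :
    (∀ a b : V × V, hJ y (Qnat y a) (Qnat y b) = - hJ y a b) ∧
    (∀ a : V × V, Qnat y (Qnat y a) = a) := by
  have hn : ‖y‖ ≠ 0 := norm_ne_zero_iff.mpr hy
  constructor
  · intro a b
    simp only [hJ, Qnat, real_inner_smul_left, real_inner_smul_right]
    field_simp
    ring
  · intro a
    simp only [Qnat]
    ext <;> simp [smul_smul, hn]
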